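/- arXiv:math/9611215 — 5 statements merged into one kernel-verified Lean document; each statement's English description precedes it below -/
import Mathlib

section
/- The jaw order J is a trapezoid order; that is, there exist functions l, r, L, R : {1,2,3,B,C,D,E,F,G} → ℝ with l x ≤ r x and L x ≤ R x for every x, such that for all x, y: x ≺ y in J if and only if r x < l y and R x < L y. -/
/-! The representation is given with natural-number endpoints, so that checking it is a finite
computation; it is then transported to `ℝ` along the cast, since strictly monotone maps
preserve every condition of a trapezoid representation. -/

/-- The nine elements {1, 2, 3, B, C, D, E, F, G} of the jaw order. -/
inductive JawElt : Type
  | e1 | e2 | e3 | B | C | D | E | F | G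
  deriving DecidableEq

open JawElt

/-- The jaw order: its strict comparabilities are exactly
1≺2, 2≺3, 1≺3, 1≺D, B≺C, B≺D, E≺D, E≺F, F≺G, E≺G, E≺3. -/
def jawLT : JawElt → JawElt → Prop := fun u v =>
  (u, v) ∈ ([(e1, e2), (e2, e3), (e1, e3), (e1, D), (B, C), (B, D),
    (E, D), (E, F), (F, G), (E, G), (E, e3)] : List (JawElt × JawElt))

def IsTrapezoidRep {α β : Type*} [Preorder β] (lt : α → α → Prop) (l r L R : α → β) : Prop :=
  (∀ x, l x ≤ r x) ∧ (∀ x, L x ≤ R x) ∧ ∀ x y, lt x y ↔ r x < l y ∧ R x < L y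

theorem IsTrapezoidRep.comp_strictMono {α β γ : Type*} [LinearOrder β] [Preorder γ]
    {lt : α → α → Prop} {l r L R : α → β} {f : β → γ} (hf : StrictMono f)
    (h : IsTrapezoidRep lt l r L R) : IsTrapezoidRep lt (f ∘ l) (f ∘ r) (f ∘ L) (f ∘ R) := by
  obtain ⟨hlr, hLR, hlt⟩ := h
  refine ⟨fun x => hf.monotone (hlr x), fun x => hf.monotone (hLR x), fun x y => ?_⟩
  simp only [Function.comp_apply, hf.lt_iff_lt, hlt]

namespace JawElt

instance : Fintype JawElt :=
  ⟨{e1, e2, e3, B, C, D, E, F, G}, fun x => by cases x <;> decide⟩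

instance : DecidableRel jawLT := fun _ _ => inferInstanceAs (Decidable (_ ∈ _))

def lowerLeft : JawElt → ℕ
  | e1 => 3 | e2 => 5 | e3 => 6 | B => 3 | C => 7 | D => 10 | E => 0 | F => 3 | G => 4

def lowerRight : JawElt → ℕ
  | e1 => 4 | e2 => 5 | e3 => 9 | B => 6 | C => 9 | D => 10 | E => 0 | F => 3 | G => 7

def upperLeft : JawElt → ℕ
  | e1 => 0 | e2 => 5 | e3 => 8 | B => 0 | C => 3 | D => 6 | E => 4 | F => 8 | G => 10

def upperRight : JawElt → ℕ
  | e1 => 4 | e2 => 7 | e3 => 9 | B => 2 | C => 9 | D => 7 | E => 5 | F => 8 | G => 10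

theorem isTrapezoidRep_jawLT :
    IsTrapezoidRep jawLT lowerLeft lowerRight upperLeft upperRight := by
  unfold IsTrapezoidRep
  decide

end JawElt

/-- The jaw order is a trapezoid order: it has a trapezoid representation. -/
theorem jaw_is_trapezoid_order :
    ∃ l r L R : JawElt → ℝ,
      (∀ u, l u ≤ r u) ∧ (∀ u, L u ≤ R u) ∧
      (∀ u v, jawLT u v ↔ (r u < l v ∧ R u < L v)) :=
  ⟨_, _, _, _, JawElt.isTrapezoidRep_jawLT.comp_strictMono Nat.strictMono_cast⟩
end

section
/- (Jaw Lemma) For every trapezoid representation (l, r, L, R) of the jaw order J, either the inequalities r B < l C ≤ r 1 < l 2 ≤ r E < l D ≤ r 2 < l 3 ≤ r F < l G together with R E < L 2 and R 2 < L D all hold, or the inequalities R B < L C ≤ R 1 < L 2 ≤ R E < L D ≤ R 2 < L 3 ≤ R F < L G together with r E < l 2 and r 2 < l D all hold. -/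
open JawElt

instance : DecidableRel jawLT := fun _ _ => inferInstanceAs (Decidable (_ ∈ _))

structure IsTrapezoidRep_s1 {α : Type*} (lt : α → α → Prop) (l r L R : α → ℝ) : Prop where
  lower_le : ∀ u, l u ≤ r u
  upper_le : ∀ u, L u ≤ R u
  lt_iff : ∀ u v, lt u v ↔ r u < l v ∧ R u < L v

namespace IsTrapezoidRep_s1

variable {α : Type*} {lt : α → α → Prop} {l r L R : α → ℝ} {a b c d u v : α}

theorem swap (h : IsTrapezoidRep_s1 lt l r L R) : IsTrapezoidRep_s1 lt L R l r :=
  ⟨h.upper_le, h.lower_le, fun x y => (h.lt_iff x y).trans and_comm⟩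

theorem upper_le_of_not_lt (h : IsTrapezoidRep_s1 lt l r L R) (huv : ¬ lt u v)
    (hlower : r u < l v) : L v ≤ R u :=
  le_of_not_gt fun hupper => huv ((h.lt_iff u v).2 ⟨hlower, hupper⟩)

theorem lower_le_of_not_lt (h : IsTrapezoidRep_s1 lt l r L R) (huv : ¬ lt u v)
    (hupper : R u < L v) : l v ≤ r u :=
  h.swap.upper_le_of_not_lt huv hupper

-- The intervals of `b` and `c` cannot overlap on both baselines, or `a` would lie before `d`.
theorem upper_lt_of_lower_le (h : IsTrapezoidRep_s1 lt l r L R) (hab : lt a b) (hcd : lt c d)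
    (had : ¬ lt a d) (hbc : l b ≤ r c) : R c < L b := by
  obtain ⟨hab_lower, hab_upper⟩ := (h.lt_iff a b).1 hab
  obtain ⟨hcd_lower, hcd_upper⟩ := (h.lt_iff c d).1 hcd
  have hda := h.upper_le_of_not_lt had (by linarith)
  linarith

theorem jaw_chain {l r L R : JawElt → ℝ} (hJ : IsTrapezoidRep_s1 jawLT l r L R)
    (h2E : l e2 ≤ r E) (hE2 : R E < L e2) :
    r B < l C ∧ l C ≤ r e1 ∧ r e1 < l e2 ∧ l e2 ≤ r E ∧ r E < l D ∧
      l D ≤ r e2 ∧ r e2 < l e3 ∧ l e3 ≤ r F ∧ r F < l G ∧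
      R E < L e2 ∧ R e2 < L D := by
  have comp : ∀ u v, jawLT u v → r u < l v ∧ R u < L v := fun u v => (hJ.lt_iff u v).1
  obtain ⟨h12, H12⟩ := comp e1 e2 (by decide)
  obtain ⟨h23, H23⟩ := comp e2 e3 (by decide)
  obtain ⟨h1D, H1D⟩ := comp e1 D (by decide)
  obtain ⟨hBC, HBC⟩ := comp B C (by decide)
  obtain ⟨hBD, HBD⟩ := comp B D (by decide)
  obtain ⟨hED, -⟩ := comp E D (by decide)
  obtain ⟨hEF, HEF⟩ := comp E F (by decide)
  obtain ⟨hFG, HFG⟩ := comp F G (by decide)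
  obtain ⟨hE3, -⟩ := comp E e3 (by decide)
  have := hJ.lower_le e2; have := hJ.lower_le F
  have := hJ.upper_le e2; have := hJ.upper_le F
  have HG1 : L G ≤ R e1 := hJ.upper_le_of_not_lt (by decide) (by linarith)
  have hD2 : l D ≤ r e2 := by
    by_contra! h2D
    have HD2 : L D ≤ R e2 := hJ.upper_le_of_not_lt (by decide) h2D
    have hDF : l D ≤ r F := hJ.lower_le_of_not_lt (by decide) (by linarith)
    have HGB : L G ≤ R B := hJ.upper_le_of_not_lt (by decide) (by linarith)
    have hCE : l C ≤ r E := hJ.lower_le_of_not_lt (by decide) (by linarith)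
    have H3B : L e3 ≤ R B := hJ.upper_le_of_not_lt (by decide) (by linarith)
    linarith
  have H2D : R e2 < L D :=
    hJ.upper_lt_of_lower_le (a := B) (d := e3) (by decide) (by decide) (by decide) hD2
  have hC1 : l C ≤ r e1 := by
    by_contra! h1C
    have HC1 : L C ≤ R e1 := hJ.upper_le_of_not_lt (by decide) h1C
    have h3B : l e3 ≤ r B := hJ.lower_le_of_not_lt (by decide) (by linarith)
    linarith
  have h3F : l e3 ≤ r F := by
    by_contra! hF3
    have H3F : L e3 ≤ R F := hJ.upper_le_of_not_lt (by decide) hF3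
    linarith
  exact ⟨hBC, hC1, h12, h2E, hED, hD2, h23, h3F, hFG, hE2, H2D⟩

end IsTrapezoidRep_s1

/-- The Jaw Lemma: in every trapezoid representation of the jaw order,
either the chain of inequalities
`r B < l C ≤ r 1 < l 2 ≤ r E < l D ≤ r 2 < l 3 ≤ r F < l G`
together with `R E < L 2` and `R 2 < L D` hold, or the same with the roles
of the upper and lower baselines exchanged. -/
theorem jaw_lemma (l r L R : JawElt → ℝ)
    (hlr : ∀ u, l u ≤ r u) (hLR : ∀ u, L u ≤ R u)
    (hrep : ∀ u v, jawLT u v ↔ (r u < l v ∧ R u < L v)) :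
    (r B < l C ∧ l C ≤ r e1 ∧ r e1 < l e2 ∧ l e2 ≤ r E ∧ r E < l D ∧
      l D ≤ r e2 ∧ r e2 < l e3 ∧ l e3 ≤ r F ∧ r F < l G ∧
      R E < L e2 ∧ R e2 < L D) ∨
    (R B < L C ∧ L C ≤ R e1 ∧ R e1 < L e2 ∧ L e2 ≤ R E ∧ R E < L D ∧
      L D ≤ R e2 ∧ R e2 < L e3 ∧ L e3 ≤ R F ∧ R F < L G ∧
      r E < l e2 ∧ r e2 < l D) := by
  have hJ : IsTrapezoidRep_s1 jawLT l r L R := ⟨hlr, hLR, hrep⟩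
  rcases le_or_gt (l e2) (r E) with h2E | hE2
  · exact .inl <| hJ.jaw_chain h2E <|
      hJ.upper_lt_of_lower_le (a := e1) (d := F) (by decide) (by decide) (by decide) h2E
  · exact .inr <| hJ.swap.jaw_chain (hJ.upper_le_of_not_lt (by decide) hE2) hE2
end

section
/- The order P is a trapezoid order; in fact P has a trapezoid representation which is a parallelogram representation (so P is a parallelogram order). -/
/-- The twelve elements {1, 2, 3, a, b, c, d, w, x, y, z, N} of the order P. -/
inductive PElt : Type
  | e1 | e2 | e3 | a | b | c | d | w | x | y | z | N
  deriving DecidableEq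

instance : Fintype PElt where
  elems := {PElt.e1, PElt.e2, PElt.e3, PElt.a, PElt.b, PElt.c, PElt.d, PElt.w, PElt.x, PElt.y, PElt.z, PElt.N}
  complete := fun u => by cases u <;> simp

open PElt

/-- The order P: its strict comparabilities are exactly
1≺2, 2≺3, 1≺3, 1≺d, 1≺z, 1≺N, a≺b, a≺c, a≺d, a≺z, a≺3, a≺N, b≺c, b≺d,
w≺d, w≺x, w≺y, w≺3, w≺z, w≺N, x≺y, x≺z, N≺3, N≺d, N≺z. -/
def PLT : PElt → PElt → Prop := fun u v =>
  (u, v) ∈ ([(e1, e2), (e2, e3), (e1, e3), (e1, d), (e1, z), (e1, N),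
    (a, b), (a, c), (a, d), (a, z), (a, e3), (a, N), (b, c), (b, d),
    (w, d), (w, x), (w, y), (w, e3), (w, z), (w, N), (x, y), (x, z),
    (N, e3), (N, d), (N, z)] : List (PElt × PElt))

def li : PElt → ℤ
  | e1 => 0 | e2 => 3 | e3 => 6 | a => 0 | b => 1 | c => 2
  | d => 5 | w => 3 | x => 6 | y => 7 | z => 7 | N => 4

def Li : PElt → ℤ
  | e1 => 0 | e2 => 3 | e3 => 6 | a => 3 | b => 6 | c => 7
  | d => 7 | w => 0 | x => 1 | y => 2 | z => 5 | N => 4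

def ni : PElt → ℤ
  | e1 => 2 | e2 => 2 | _ => 0

instance : DecidablePred (fun p : PElt × PElt => PLT p.1 p.2) := by
  intro p; unfold PLT; infer_instance

instance (u v : PElt) : Decidable (PLT u v) := by
  unfold PLT; infer_instance

lemma key : ∀ u v, PLT u v ↔ (li u + ni u < li v ∧ Li u + ni u < Li v) := by
  decide

lemma ni_nonneg : ∀ u, 0 ≤ ni u := by decide

/-- The order P is a trapezoid order; in fact it has a parallelogram
representation (every trapezoid has equal-length upper and lower intervals). -/
theorem P_is_parallelogram_order :
    ∃ l r L R : PElt → ℝ,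
      (∀ u, l u ≤ r u) ∧ (∀ u, L u ≤ R u) ∧
      (∀ u v, PLT u v ↔ (r u < l v ∧ R u < L v)) ∧
      (∀ u, r u - l u = R u - L u) := by
  refine ⟨fun u => (li u : ℝ), fun u => ((li u + ni u : ℤ) : ℝ),
    fun u => (Li u : ℝ), fun u => ((Li u + ni u : ℤ) : ℝ), ?_, ?_, ?_, ?_⟩
  · intro u
    have h : (0:ℝ) ≤ (ni u : ℝ) := by exact_mod_cast ni_nonneg u
    push_cast
    linarith
  · intro u
    have h : (0:ℝ) ≤ (ni u : ℝ) := by exact_mod_cast ni_nonneg u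
    push_cast
    linarith
  · intro u v
    rw [key u v, Int.cast_lt, Int.cast_lt]
  · intro u
    push_cast
    ring
end

section
/- Let x, y, z, p, q be elements of a set equipped with functions l, r, L, R into ℝ with l ≤ r and L ≤ R pointwise. Suppose r x < l y, r y < l z, R x < L y, R y < L z (so x, y, z form a chain with pairwise disjoint intervals on both baselines); suppose for each t ∈ {x, y, z} the containments l p ≤ l t, r t ≤ r p, L q ≤ L t, and R t ≤ R q hold; and suppose (r t − l t) + (R t − L t) = 2 for each t ∈ {x, y, z, p, q}. Then a contradiction follows (no such configuration exists). -/
/-!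
The three disjoint lower intervals of the chain fit inside the lower interval of `p` with room to
spare, so their lengths add up to less than `r p - l p ≤ 2`; likewise the upper lengths add up to
less than `R q - L q ≤ 2`. But the six lengths of `x`, `y`, `z` add up to `6`, each unit trapezoid
contributing `2`.
-/

theorem sum_lengths_lt_of_chain_within {α β : Type*} [AddCommGroup β] [LinearOrder β]
    [IsOrderedAddMonoid β] (l r : α → β) {x y z p : α}
    (hxy : r x < l y) (hyz : r y < l z) (hpx : l p ≤ l x) (hzp : r z ≤ r p) :
    (r x - l x) + (r y - l y) + (r z - l z) < r p - l p := by
  have gaps_pos : 0 < (l y - r x) + (l z - r y) := add_pos (sub_pos.2 hxy) (sub_pos.2 hyz)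
  calc (r x - l x) + (r y - l y) + (r z - l z)
      < (r x - l x) + (r y - l y) + (r z - l z) + ((l y - r x) + (l z - r y)) :=
        lt_add_of_pos_right _ gaps_pos
    _ = r z - l x := by abel
    _ ≤ r p - l p := sub_le_sub hzp hpx

/-- The arithmetic core of the proof that the proper trapezoid order of the
paper is not a unit trapezoid order: a three-element chain x, y, z with
pairwise disjoint intervals on both baselines cannot have all its lower
intervals inside the lower interval of an element p and all its upper
intervals inside the upper interval of an element q, if all five trapezoids
are unit trapezoids. -/
theorem no_unit_chain_in_jaws {α : Type*} (l r L R : α → ℝ) (x y z p q : α)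
    (hlr : ∀ t, l t ≤ r t) (hLR : ∀ t, L t ≤ R t)
    (hxy : r x < l y) (hyz : r y < l z)
    (hXY : R x < L y) (hYZ : R y < L z)
    (hcont : ∀ t ∈ ({x, y, z} : Set α),
      l p ≤ l t ∧ r t ≤ r p ∧ L q ≤ L t ∧ R t ≤ R q)
    (hunit : ∀ t ∈ ({x, y, z, p, q} : Set α),
      (r t - l t) + (R t - L t) = 2) :
    False := by
  obtain ⟨hpx, -, hqx, -⟩ := hcont x (by simp)
  obtain ⟨-, hzp, -, hzq⟩ := hcont z (by simp)
  have lower := sum_lengths_lt_of_chain_within l r hxy hyz hpx hzp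
  have upper := sum_lengths_lt_of_chain_within L R hXY hYZ hqx hzq
  have hp : r p - l p ≤ 2 := by linarith [hunit p (by simp), hLR p]
  have hq : R q - L q ≤ 2 := by linarith [hunit q (by simp), hlr q]
  linarith [hunit x (by simp), hunit y (by simp), hunit z (by simp)]
end

section
/- A strict partial order ≺ on a finite set X has a trapezoid representation if and only if it is the intersection of two interval orders: that is, if and only if there exist strict partial orders ≺₁ and ≺₂ on X, each admitting an interval representation, such that for all x, y ∈ X, x ≺ y if and only if x ≺₁ y and x ≺₂ y. Hence the trapezoid orders are exactly the orders of interval dimension at most two. -/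
section IntervalOrder

variable {X α : Type*} [Preorder α] {f g : X → α}

theorem intervalOrder_irrefl (hfg : ∀ u, f u ≤ g u) (u : X) : ¬ g u < f u :=
  (hfg u).not_gt

theorem intervalOrder_trans (hfg : ∀ u, f u ≤ g u) {u v w : X}
    (huv : g u < f v) (hvw : g v < f w) : g u < f w :=
  huv.trans_le ((hfg v).trans hvw.le)

end IntervalOrder

theorem trapezoid_iff_intersection_of_two_interval_orders_general
    {X : Type*} (lt : X → X → Prop) :
    (∃ l r L R : X → ℝ,
      (∀ u, l u ≤ r u) ∧ (∀ u, L u ≤ R u) ∧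
      (∀ u v, lt u v ↔ (r u < l v ∧ R u < L v))) ↔
    (∃ lt₁ lt₂ : X → X → Prop,
      (∀ u, ¬ lt₁ u u) ∧ (∀ u v w, lt₁ u v → lt₁ v w → lt₁ u w) ∧
      (∀ u, ¬ lt₂ u u) ∧ (∀ u v w, lt₂ u v → lt₂ v w → lt₂ u w) ∧
      (∃ f g : X → ℝ, (∀ u, f u ≤ g u) ∧ (∀ u v, lt₁ u v ↔ g u < f v)) ∧
      (∃ f g : X → ℝ, (∀ u, f u ≤ g u) ∧ (∀ u v, lt₂ u v ↔ g u < f v)) ∧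
      (∀ u v, lt u v ↔ (lt₁ u v ∧ lt₂ u v))) := by
  constructor
  · rintro ⟨l, r, L, R, hlr, hLR, hrep⟩
    exact ⟨fun u v => r u < l v, fun u v => R u < L v,
      intervalOrder_irrefl hlr, fun _ _ _ => intervalOrder_trans hlr,
      intervalOrder_irrefl hLR, fun _ _ _ => intervalOrder_trans hLR,
      ⟨l, r, hlr, fun _ _ => Iff.rfl⟩, ⟨L, R, hLR, fun _ _ => Iff.rfl⟩, hrep⟩
  · rintro ⟨lt₁, lt₂, -, -, -, -, ⟨f₁, g₁, hfg₁, hrep₁⟩, ⟨f₂, g₂, hfg₂, hrep₂⟩, hint⟩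
    refine ⟨f₁, g₁, f₂, g₂, hfg₁, hfg₂, fun u v => ?_⟩
    rw [hint, hrep₁, hrep₂]

/-- A strict partial order on a finite set has a trapezoid representation if
and only if it is the intersection of two interval orders; that is, the
trapezoid orders are exactly the orders of interval dimension at most two. -/
theorem trapezoid_iff_intersection_of_two_interval_orders
    {X : Type*} [Fintype X] (lt : X → X → Prop)
    (hirr : ∀ u, ¬ lt u u)
    (htrans : ∀ u v w, lt u v → lt v w → lt u w) :
    (∃ l r L R : X → ℝ,
      (∀ u, l u ≤ r u) ∧ (∀ u, L u ≤ R u) ∧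
      (∀ u v, lt u v ↔ (r u < l v ∧ R u < L v))) ↔
    (∃ lt₁ lt₂ : X → X → Prop,
      (∀ u, ¬ lt₁ u u) ∧ (∀ u v w, lt₁ u v → lt₁ v w → lt₁ u w) ∧
      (∀ u, ¬ lt₂ u u) ∧ (∀ u v w, lt₂ u v → lt₂ v w → lt₂ u w) ∧
      (∃ f g : X → ℝ, (∀ u, f u ≤ g u) ∧ (∀ u v, lt₁ u v ↔ g u < f v)) ∧
      (∃ f g : X → ℝ, (∀ u, f u ≤ g u) ∧ (∀ u v, lt₂ u v ↔ g u < f v)) ∧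
      (∀ u v, lt u v ↔ (lt₁ u v ∧ lt₂ u v))) :=
  trapezoid_iff_intersection_of_two_interval_orders_general lt
end
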